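/- arXiv:2302.07540 — 3 statements merged into one kernel-verified Lean document; each statement's English description precedes it below -/
import Mathlib

section
/- Let X, Y, R be random variables on a probability space, with Y taking values in a finite label set C and R taking values in {0,1}. Assume R is conditionally independent of X given Y, and E[R | Y] = φ(Y) almost surely where 0 < φ(k) ≤ 1 for every k ∈ C. Let ℓ_ℓ be a labeled loss with ℓ_ℓ(X,Y) integrable, ℓ_u an unlabeled loss with ℓ_u(X) integrable, and λ ∈ ℝ. Then E[ (R / φ(Y)) · ℓ_ℓ(X,Y) − λ · ((R − φ(Y)) / φ(Y)) · ℓ_u(X) ] = E[ℓ_ℓ(X,Y)]. In particular, E[((R − φ(Y)) / φ(Y)) · ℓ_u(X)] = 0, so the debiased semi-supervised risk estimator is unbiased when the mechanism is correctly specified. -/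
open MeasureTheory ProbabilityTheory

/-- **Unbiasedness of the debiased semi-supervised risk estimator under self-masked MNAR
labels.** If `R ⟂ X | Y` and `E[R | Y] = φ(Y)` a.s. with `0 < φ k ≤ 1`, then for any labeled
loss `ℓℓ` with `ℓℓ(X,Y)` integrable, any unlabeled loss `ℓu` with `ℓu(X)` integrable, and any
`λ ∈ ℝ`, `E[(R/φ(Y)) ℓℓ(X,Y) − λ ((R − φ(Y))/φ(Y)) ℓu(X)] = E[ℓℓ(X,Y)]`; in particular
`E[((R − φ(Y))/φ(Y)) ℓu(X)] = 0`. -/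
theorem debiased_ssl_risk_unbiased_mnar
    {Ω : Type*} [MeasurableSpace Ω] [StandardBorelSpace Ω]
    {𝒳 : Type*} [MeasurableSpace 𝒳]
    {C : Type*} [Fintype C] [MeasurableSpace C] [MeasurableSingletonClass C]
    (μ : Measure Ω) [IsProbabilityMeasure μ]
    (X : Ω → 𝒳) (Y : Ω → C) (R : Ω → ℝ)
    (hX : Measurable X) (hY : Measurable Y) (hR : Measurable R)
    (hR01 : ∀ ω, R ω = 0 ∨ R ω = 1)
    (hCI : CondIndepFun (MeasurableSpace.comap Y inferInstance) hY.comap_le R X μ)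
    (φ : C → ℝ) (hφ_pos : ∀ k, 0 < φ k) (hφ_le : ∀ k, φ k ≤ 1)
    (hmech : μ[R | MeasurableSpace.comap Y inferInstance] =ᵐ[μ] fun ω => φ (Y ω))
    (ℓℓ : 𝒳 → C → ℝ) (hℓℓ : Measurable fun p : 𝒳 × C => ℓℓ p.1 p.2)
    (hintℓ : Integrable (fun ω => ℓℓ (X ω) (Y ω)) μ)
    (ℓu : 𝒳 → ℝ) (hℓu : Measurable ℓu)
    (hintu : Integrable (fun ω => ℓu (X ω)) μ)
    (lam : ℝ) :
    (∫ ω, ((R ω / φ (Y ω)) * ℓℓ (X ω) (Y ω)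
        - lam * ((R ω - φ (Y ω)) / φ (Y ω)) * ℓu (X ω)) ∂μ
      = ∫ ω, ℓℓ (X ω) (Y ω) ∂μ)
    ∧ ∫ ω, ((R ω - φ (Y ω)) / φ (Y ω)) * ℓu (X ω) ∂μ = 0 := by
  classical
  have hmY := hY.comap_le
  have hφmeas : Measurable φ := measurable_of_countable φ
  have hSmem : ∀ k : C, MeasurableSet[MeasurableSpace.comap Y inferInstance] (Y ⁻¹' {k}) :=
    fun k => ⟨{k}, measurableSet_singleton k, rfl⟩
  have hSmeas : ∀ k : C, MeasurableSet (Y ⁻¹' {k}) := fun k => hY (measurableSet_singleton k)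
  have hT : MeasurableSet (R ⁻¹' {1}) := hR (measurableSet_singleton 1)
  have hRind : Set.indicator (R ⁻¹' {1}) (fun _ => (1 : ℝ)) = R := by
    funext ω
    rcases hR01 ω with h | h
    · have hω : ω ∉ R ⁻¹' {1} := by simp [Set.mem_preimage, h]
      rw [Set.indicator_of_notMem hω, h]
    · have hω : ω ∈ R ⁻¹' {1} := by simp [Set.mem_preimage, h]
      rw [Set.indicator_of_mem hω, h]
  have hcondT : (μ⟦R ⁻¹' {1} | MeasurableSpace.comap Y inferInstance⟧) =ᵐ[μ] fun ω => φ (Y ω) := by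
    rw [hRind]; exact hmech
  -- the crucial set-level identity
  have hset : ∀ (k : C) (t : Set 𝒳), MeasurableSet t →
      μ (X ⁻¹' t ∩ (Y ⁻¹' {k} ∩ R ⁻¹' {1})) = ENNReal.ofReal (φ k) * μ (X ⁻¹' t ∩ Y ⁻¹' {k}) := by
    intro k t ht
    have h1 := (condIndepFun_iff_condExp_inter_preimage_eq_mul (hm' := hmY)
      hR hX).mp hCI {1} t (measurableSet_singleton 1) ht
    have h2 : (μ⟦R ⁻¹' {1} ∩ X ⁻¹' t | MeasurableSpace.comap Y inferInstance⟧)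
        =ᵐ[μ] fun ω => φ (Y ω) * (μ⟦X ⁻¹' t | MeasurableSpace.comap Y inferInstance⟧) ω := by
      refine h1.trans ?_
      filter_upwards [hcondT] with ω hω
      rw [hω]
    have e1 : ∫ ω in Y ⁻¹' {k}, (μ⟦R ⁻¹' {1} ∩ X ⁻¹' t | MeasurableSpace.comap Y inferInstance⟧) ω ∂μ
        = (μ (X ⁻¹' t ∩ (Y ⁻¹' {k} ∩ R ⁻¹' {1}))).toReal := by
      rw [setIntegral_condExp hmY ((integrable_const (1 : ℝ)).indicator (hT.inter (hX ht)))
          (hSmem k), setIntegral_indicator (hT.inter (hX ht)), setIntegral_const, smul_eq_mul,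
          mul_one, measureReal_def]
      congr 2
      ext ω
      simp only [Set.mem_inter_iff, Set.mem_preimage]
      tauto
    have e2 : ∫ ω in Y ⁻¹' {k}, φ (Y ω) * (μ⟦X ⁻¹' t | MeasurableSpace.comap Y inferInstance⟧) ω ∂μ
        = φ k * (μ (X ⁻¹' t ∩ Y ⁻¹' {k})).toReal := by
      have hcongr : Set.EqOn (fun ω => φ (Y ω) * (μ⟦X ⁻¹' t | MeasurableSpace.comap Y inferInstance⟧) ω)
          (fun ω => φ k * (μ⟦X ⁻¹' t | MeasurableSpace.comap Y inferInstance⟧) ω) (Y ⁻¹' {k}) := by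
        intro ω hω
        have : Y ω = k := by simpa using hω
        simp [this]
      rw [setIntegral_congr_fun (hSmeas k) hcongr, integral_const_mul,
        setIntegral_condExp hmY ((integrable_const (1 : ℝ)).indicator (hX ht)) (hSmem k),
        setIntegral_indicator (hX ht), setIntegral_const, smul_eq_mul, mul_one, Set.inter_comm, measureReal_def]
    have e3 : ∫ ω in Y ⁻¹' {k}, (μ⟦R ⁻¹' {1} ∩ X ⁻¹' t | MeasurableSpace.comap Y inferInstance⟧) ω ∂μ
        = ∫ ω in Y ⁻¹' {k}, φ (Y ω) * (μ⟦X ⁻¹' t | MeasurableSpace.comap Y inferInstance⟧) ω ∂μ :=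
      setIntegral_congr_ae (hSmeas k) (h2.mono fun ω hω _ => hω)
    have key : (μ (X ⁻¹' t ∩ (Y ⁻¹' {k} ∩ R ⁻¹' {1}))).toReal
        = φ k * (μ (X ⁻¹' t ∩ Y ⁻¹' {k})).toReal := by
      rw [← e1, e3, e2]
    have hne1 : μ (X ⁻¹' t ∩ (Y ⁻¹' {k} ∩ R ⁻¹' {1})) ≠ ⊤ := measure_ne_top _ _
    have hne2 : ENNReal.ofReal (φ k) * μ (X ⁻¹' t ∩ Y ⁻¹' {k}) ≠ ⊤ :=
      ENNReal.mul_ne_top ENNReal.ofReal_ne_top (measure_ne_top _ _)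
    apply (ENNReal.toReal_eq_toReal_iff' hne1 hne2).mp
    rw [ENNReal.toReal_mul, ENNReal.toReal_ofReal (hφ_pos k).le]
    exact key
  -- map-measure version
  have hmap : ∀ k : C, Measure.map X (μ.restrict (Y ⁻¹' {k} ∩ R ⁻¹' {1}))
      = ENNReal.ofReal (φ k) • Measure.map X (μ.restrict (Y ⁻¹' {k})) := by
    intro k
    ext t ht
    rw [Measure.map_apply hX ht, Measure.smul_apply, Measure.map_apply hX ht,
      Measure.restrict_apply (hX ht), Measure.restrict_apply (hX ht), smul_eq_mul]
    exact hset k t ht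
  -- key integral identity
  have hkey : ∀ (k : C) (g : 𝒳 → ℝ), Measurable g →
      ∫ ω in Y ⁻¹' {k}, R ω * g (X ω) ∂μ = φ k * ∫ ω in Y ⁻¹' {k}, g (X ω) ∂μ := by
    intro k g hg
    have h1 : ∀ ω, R ω * g (X ω) = (R ⁻¹' {1}).indicator (fun ω => g (X ω)) ω := by
      intro ω
      rcases hR01 ω with h | h
      · have hω : ω ∉ R ⁻¹' {1} := by simp [Set.mem_preimage, h]
        rw [h, zero_mul, Set.indicator_of_notMem hω]
      · have hω : ω ∈ R ⁻¹' {1} := by simp [Set.mem_preimage, h]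
        rw [h, one_mul, Set.indicator_of_mem hω]
    calc ∫ ω in Y ⁻¹' {k}, R ω * g (X ω) ∂μ
        = ∫ ω in Y ⁻¹' {k}, (R ⁻¹' {1}).indicator (fun ω => g (X ω)) ω ∂μ := by
          simp_rw [h1]
      _ = ∫ ω in Y ⁻¹' {k} ∩ R ⁻¹' {1}, g (X ω) ∂μ := setIntegral_indicator hT
      _ = ∫ x, g x ∂(Measure.map X (μ.restrict (Y ⁻¹' {k} ∩ R ⁻¹' {1}))) :=
          (integral_map hX.aemeasurable hg.aestronglyMeasurable).symm
      _ = φ k * ∫ ω in Y ⁻¹' {k}, g (X ω) ∂μ := by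
          rw [hmap k, integral_smul_measure, ENNReal.toReal_ofReal (hφ_pos k).le,
            integral_map hX.aemeasurable hg.aestronglyMeasurable, smul_eq_mul]
  -- fiberwise identities
  have hAk : ∀ k : C, ∫ ω in Y ⁻¹' {k}, (R ω / φ (Y ω)) * ℓℓ (X ω) (Y ω) ∂μ
      = ∫ ω in Y ⁻¹' {k}, ℓℓ (X ω) (Y ω) ∂μ := by
    intro k
    have hg : Measurable fun x => ℓℓ x k := hℓℓ.comp (measurable_id.prodMk measurable_const)
    have e1 : ∫ ω in Y ⁻¹' {k}, (R ω / φ (Y ω)) * ℓℓ (X ω) (Y ω) ∂μ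
        = ∫ ω in Y ⁻¹' {k}, (1 / φ k) * (R ω * ℓℓ (X ω) k) ∂μ := by
      refine setIntegral_congr_fun (hSmeas k) fun ω hω => ?_
      have : Y ω = k := by simpa using hω
      rw [this]; ring
    have e2 : ∫ ω in Y ⁻¹' {k}, ℓℓ (X ω) (Y ω) ∂μ = ∫ ω in Y ⁻¹' {k}, ℓℓ (X ω) k ∂μ := by
      refine setIntegral_congr_fun (hSmeas k) fun ω hω => ?_
      have : Y ω = k := by simpa using hω
      rw [this]
    rw [e1, e2, integral_const_mul, hkey k _ hg, ← mul_assoc, one_div,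
      inv_mul_cancel₀ (hφ_pos k).ne', one_mul]
  have hBk : ∀ k : C, ∫ ω in Y ⁻¹' {k}, ((R ω - φ (Y ω)) / φ (Y ω)) * ℓu (X ω) ∂μ = 0 := by
    intro k
    have hi2 : Integrable (fun ω => ℓu (X ω)) (μ.restrict (Y ⁻¹' {k})) := hintu.restrict
    have hi1 : Integrable (fun ω => R ω * ℓu (X ω)) (μ.restrict (Y ⁻¹' {k})) := by
      refine hi2.norm.mono' ((hR.mul (hℓu.comp hX)).aestronglyMeasurable) ?_
      filter_upwards with ω
      rcases hR01 ω with h | h <;> simp [h, norm_nonneg]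
    have e1 : ∫ ω in Y ⁻¹' {k}, ((R ω - φ (Y ω)) / φ (Y ω)) * ℓu (X ω) ∂μ
        = ∫ ω in Y ⁻¹' {k}, ((1 / φ k) * (R ω * ℓu (X ω)) - ℓu (X ω)) ∂μ := by
      refine setIntegral_congr_fun (hSmeas k) fun ω hω => ?_
      have hYω : Y ω = k := by simpa using hω
      rw [hYω]
      have hφ : φ k ≠ 0 := (hφ_pos k).ne'
      rw [one_div, sub_div, div_self hφ, sub_mul, one_mul, div_eq_inv_mul, mul_assoc]
    rw [e1, integral_sub (hi1.const_mul _) hi2, integral_const_mul, hkey k _ hℓu,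
      ← mul_assoc, one_div, inv_mul_cancel₀ (hφ_pos k).ne', one_mul, sub_self]
  -- decomposition over fibers
  have hdecomp : ∀ f : Ω → ℝ, (∀ k : C, Integrable ((Y ⁻¹' {k}).indicator f) μ) →
      Integrable f μ ∧ ∫ ω, f ω ∂μ = ∑ k : C, ∫ ω in Y ⁻¹' {k}, f ω ∂μ := by
    intro f hf
    have hfs : f = fun ω => ∑ k : C, (Y ⁻¹' {k}).indicator f ω := by
      funext ω
      rw [Finset.sum_eq_single (Y ω)]
      · exact (Set.indicator_of_mem (Set.mem_preimage.mpr rfl) f).symm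
      · intro k _ hk
        refine Set.indicator_of_notMem ?_ f
        intro hmem
        exact hk (Set.mem_singleton_iff.mp (Set.mem_preimage.mp hmem)).symm
      · intro h; exact absurd (Finset.mem_univ _) h
    have hint : Integrable f μ := by
      rw [hfs]; exact integrable_finset_sum _ fun k _ => hf k
    refine ⟨hint, ?_⟩
    calc ∫ ω, f ω ∂μ = ∫ ω, ∑ k : C, (Y ⁻¹' {k}).indicator f ω ∂μ := by rw [← hfs]
      _ = ∑ k : C, ∫ ω, (Y ⁻¹' {k}).indicator f ω ∂μ := integral_finset_sum _ fun k _ => hf k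
      _ = ∑ k : C, ∫ ω in Y ⁻¹' {k}, f ω ∂μ :=
          Finset.sum_congr rfl fun k _ => integral_indicator (hSmeas k)
  have hRabs : ∀ ω, |R ω| ≤ 1 := fun ω => by rcases hR01 ω with h | h <;> simp [h]
  -- integrability of the indicator pieces
  have hIF1 : ∀ k : C, Integrable
      ((Y ⁻¹' {k}).indicator fun ω => (R ω / φ (Y ω)) * ℓℓ (X ω) (Y ω)) μ := by
    intro k
    refine (hintℓ.norm.const_mul (1 / φ k)).mono'
      (((hR.div (hφmeas.comp hY)).mul (hℓℓ.comp (hX.prodMk hY))).indicator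
        (hSmeas k)).aestronglyMeasurable ?_
    filter_upwards with ω
    by_cases hω : ω ∈ Y ⁻¹' {k}
    · have hYω : Y ω = k := by simpa using hω
      rw [Set.indicator_of_mem hω, hYω, norm_mul]
      refine mul_le_mul_of_nonneg_right ?_ (norm_nonneg _)
      rw [Real.norm_eq_abs, abs_div, abs_of_pos (hφ_pos k)]
      exact (div_le_div_iff_of_pos_right (hφ_pos k)).mpr (hRabs ω)
    · rw [Set.indicator_of_notMem hω]
      simp only [norm_zero]
      exact mul_nonneg (div_nonneg zero_le_one (hφ_pos k).le) (norm_nonneg _)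
  have hIF2 : ∀ k : C, Integrable
      ((Y ⁻¹' {k}).indicator fun ω => ((R ω - φ (Y ω)) / φ (Y ω)) * ℓu (X ω)) μ := by
    intro k
    refine (hintu.norm.const_mul (1 / φ k)).mono'
      ((((hR.sub (hφmeas.comp hY)).div (hφmeas.comp hY)).mul (hℓu.comp hX)).indicator
        (hSmeas k)).aestronglyMeasurable ?_
    filter_upwards with ω
    by_cases hω : ω ∈ Y ⁻¹' {k}
    · have hYω : Y ω = k := by simpa using hω
      rw [Set.indicator_of_mem hω, hYω]
      have hRφ : |R ω - φ k| ≤ 1 := by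
        rcases hR01 ω with h | h
        · rw [h, zero_sub, abs_neg, abs_of_pos (hφ_pos k)]; exact hφ_le k
        · rw [h, abs_of_nonneg (by linarith [hφ_le k])]
          linarith [(hφ_pos k)]
      rw [norm_mul]
      refine mul_le_mul_of_nonneg_right ?_ (norm_nonneg _)
      rw [Real.norm_eq_abs, abs_div, abs_of_pos (hφ_pos k)]
      exact (div_le_div_iff_of_pos_right (hφ_pos k)).mpr hRφ
    · rw [Set.indicator_of_notMem hω]
      simp only [norm_zero]
      exact mul_nonneg (div_nonneg zero_le_one (hφ_pos k).le) (norm_nonneg _)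
  have hIF : ∀ k : C, Integrable ((Y ⁻¹' {k}).indicator fun ω =>
      (R ω / φ (Y ω)) * ℓℓ (X ω) (Y ω)
        - lam * ((R ω - φ (Y ω)) / φ (Y ω)) * ℓu (X ω)) μ := by
    intro k
    have hEq : ((Y ⁻¹' {k}).indicator fun ω =>
        (R ω / φ (Y ω)) * ℓℓ (X ω) (Y ω)
          - lam * ((R ω - φ (Y ω)) / φ (Y ω)) * ℓu (X ω))
        = fun ω => (Y ⁻¹' {k}).indicator (fun ω => (R ω / φ (Y ω)) * ℓℓ (X ω) (Y ω)) ω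
          - lam * (Y ⁻¹' {k}).indicator
              (fun ω => ((R ω - φ (Y ω)) / φ (Y ω)) * ℓu (X ω)) ω := by
      funext ω
      by_cases hω : ω ∈ Y ⁻¹' {k}
      · simp only [Set.indicator_of_mem hω]; ring
      · simp only [Set.indicator_of_notMem hω]; ring
    rw [hEq]
    exact (hIF1 k).sub ((hIF2 k).const_mul lam)
  -- fiberwise value of the full integrand
  have hFk : ∀ k : C, ∫ ω in Y ⁻¹' {k}, ((R ω / φ (Y ω)) * ℓℓ (X ω) (Y ω)
      - lam * ((R ω - φ (Y ω)) / φ (Y ω)) * ℓu (X ω)) ∂μ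
      = ∫ ω in Y ⁻¹' {k}, ℓℓ (X ω) (Y ω) ∂μ := by
    intro k
    have hi1 : Integrable (fun ω => (R ω / φ (Y ω)) * ℓℓ (X ω) (Y ω))
        (μ.restrict (Y ⁻¹' {k})) := (integrable_indicator_iff (hSmeas k)).mp (hIF1 k)
    have hi2 : Integrable (fun ω => ((R ω - φ (Y ω)) / φ (Y ω)) * ℓu (X ω))
        (μ.restrict (Y ⁻¹' {k})) := (integrable_indicator_iff (hSmeas k)).mp (hIF2 k)
    have : ∀ ω, (R ω / φ (Y ω)) * ℓℓ (X ω) (Y ω)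
        - lam * ((R ω - φ (Y ω)) / φ (Y ω)) * ℓu (X ω)
        = (R ω / φ (Y ω)) * ℓℓ (X ω) (Y ω)
          - lam * (((R ω - φ (Y ω)) / φ (Y ω)) * ℓu (X ω)) := fun ω => by ring
    simp_rw [this]
    rw [integral_sub hi1 (hi2.const_mul lam), integral_const_mul, hBk k, mul_zero, sub_zero,
      hAk k]
  constructor
  · obtain ⟨-, hsum⟩ := hdecomp _ hIF
    obtain ⟨-, hsum2⟩ := hdecomp (fun ω => ℓℓ (X ω) (Y ω))
      (fun k => hintℓ.indicator (hSmeas k))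
    rw [hsum, hsum2]
    exact Finset.sum_congr rfl fun k _ => hFk k
  · obtain ⟨-, hsum⟩ := hdecomp _ hIF2
    rw [hsum]
    simp only [hBk, Finset.sum_const_zero]
end

section
/- Let K ≥ 1, n ≥ 1, and for i ∈ {1,…,n}, k ∈ {1,…,K} let B_{i,k} > 0 be fixed positive reals, yᵢ ∈ {1,…,K} and rᵢ ∈ {0,1}. Let D = { φ ∈ ℝᴷ : φ_k > 0 for all k, and Σ_{k=1}^K B_{i,k}(1 − φ_k) > 0 for all i with rᵢ = 0 }. Assume in addition that every class is labeled at least once: for every k ∈ {1,…,K} there exists i with rᵢ = 1 and yᵢ = k. Then the function ℓ_θ(φ) = −Σ_{i=1}^n [ rᵢ · log( B_{i,yᵢ} · φ_{yᵢ} ) + (1 − rᵢ) · log( Σ_{k=1}^K B_{i,k}(1 − φ_k) ) ] is strictly convex on D. -/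
open Real

private lemma comb_pos {a b p q : ℝ} (ha : 0 ≤ a) (hb : 0 ≤ b) (hab : a + b = 1)
    (hp : 0 < p) (hq : 0 < q) : 0 < a * p + b * q := by
  rcases eq_or_lt_of_le ha with h | h
  · have hb1 : b = 1 := by linarith
    simp [← h, hb1, hq]
  · nlinarith [mul_nonneg hb hq.le]

private lemma log_cc {a b p q : ℝ} (hp : 0 < p) (hq : 0 < q)
    (ha : 0 ≤ a) (hb : 0 ≤ b) (hab : a + b = 1) :
    a * Real.log p + b * Real.log q ≤ Real.log (a * p + b * q) := by
  have h := strictConcaveOn_log_Ioi.concaveOn.2 (Set.mem_Ioi.2 hp) (Set.mem_Ioi.2 hq) ha hb hab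
  simpa [smul_eq_mul] using h

private lemma log_scc {a b p q : ℝ} (hp : 0 < p) (hq : 0 < q) (hpq : p ≠ q)
    (ha : 0 < a) (hb : 0 < b) (hab : a + b = 1) :
    a * Real.log p + b * Real.log q < Real.log (a * p + b * q) := by
  have h := strictConcaveOn_log_Ioi.2 (Set.mem_Ioi.2 hp) (Set.mem_Ioi.2 hq) hpq ha hb hab
  simpa [smul_eq_mul] using h

/-- **Strict convexity of the negative observed log-likelihood in the mechanism.**
With `B_{i,k} > 0` fixed, `yᵢ ∈ {1,…,K}`, `rᵢ ∈ {0,1}`,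
`D = {φ : φ_k > 0 ∀k, and ∑_k B_{i,k}(1 − φ_k) > 0 for all unlabeled i}`, and assuming
every class is labeled at least once, the function
`φ ↦ −∑ᵢ [rᵢ log(B_{i,yᵢ} φ_{yᵢ}) + (1 − rᵢ) log(∑_k B_{i,k}(1 − φ_k))]`
is strictly convex on `D`. -/
theorem negloglik_strictConvex_in_mechanism
    (K n : ℕ) (hK : 1 ≤ K) (hn : 1 ≤ n)
    (B : Fin n → Fin K → ℝ) (hB : ∀ i k, 0 < B i k)
    (y : Fin n → Fin K) (r : Fin n → ℝ) (hr : ∀ i, r i = 0 ∨ r i = 1)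
    (hlabeled : ∀ k : Fin K, ∃ i, r i = 1 ∧ y i = k) :
    StrictConvexOn ℝ
      {φ : Fin K → ℝ | (∀ k, 0 < φ k) ∧
        ∀ i, r i = 0 → 0 < ∑ k, B i k * (1 - φ k)}
      (fun φ => -∑ i, (r i * Real.log (B i (y i) * φ (y i))
        + (1 - r i) * Real.log (∑ k, B i k * (1 - φ k)))) := by
  constructor
  · -- convexity of the domain
    intro u hu v hv a b ha hb hab
    refine ⟨fun k => ?_, fun i hri => ?_⟩
    · simpa using comb_pos ha hb hab (hu.1 k) (hv.1 k)
    · have key : ∑ k, B i k * (1 - (a • u + b • v) k)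
          = a * ∑ k, B i k * (1 - u k) + b * ∑ k, B i k * (1 - v k) := by
        rw [Finset.mul_sum, Finset.mul_sum, ← Finset.sum_add_distrib]
        refine Finset.sum_congr rfl fun k _ => ?_
        have hb1 : b = 1 - a := by linarith
        subst hb1
        simp [Pi.add_apply, Pi.smul_apply, smul_eq_mul]
        ring
      rw [key]
      exact comb_pos ha hb hab (hu.2 i hri) (hv.2 i hri)
  · intro u hu v hv huv a b ha hb hab
    obtain ⟨k0, hk0⟩ : ∃ k, u k ≠ v k := by
      by_contra h; push_neg at h; exact huv (funext h)
    obtain ⟨i0, hi0r, hi0y⟩ := hlabeled k0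
    simp only [smul_eq_mul]
    rw [mul_neg, mul_neg, ← neg_add, neg_lt_neg_iff, Finset.mul_sum, Finset.mul_sum,
      ← Finset.sum_add_distrib]
    refine Finset.sum_lt_sum (fun i _ => ?_) ⟨i0, Finset.mem_univ i0, ?_⟩
    · -- weak inequality for every i
      rcases hr i with hri | hri
      · -- unlabeled
        simp only [hri, zero_mul, sub_zero, one_mul, zero_add]
        have key : ∑ k, B i k * (1 - (a • u + b • v) k)
            = a * ∑ k, B i k * (1 - u k) + b * ∑ k, B i k * (1 - v k) := by
          rw [Finset.mul_sum, Finset.mul_sum, ← Finset.sum_add_distrib]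
          refine Finset.sum_congr rfl fun k _ => ?_
          have hb1 : b = 1 - a := by linarith
          subst hb1
          simp [Pi.add_apply, Pi.smul_apply, smul_eq_mul]
          ring
        rw [key]
        exact log_cc (hu.2 i hri) (hv.2 i hri) ha.le hb.le hab
      · -- labeled
        simp only [hri, one_mul, sub_self, zero_mul, add_zero]
        have key : B i (y i) * (a • u + b • v) (y i)
            = a * (B i (y i) * u (y i)) + b * (B i (y i) * v (y i)) := by
          simp [Pi.add_apply, Pi.smul_apply, smul_eq_mul]; ring
        rw [key]
        exact log_cc (mul_pos (hB i (y i)) (hu.1 (y i)))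
          (mul_pos (hB i (y i)) (hv.1 (y i))) ha.le hb.le hab
    · -- strict inequality at i0
      simp only [hi0r, one_mul, sub_self, zero_mul, add_zero]
      have key : B i0 (y i0) * (a • u + b • v) (y i0)
          = a * (B i0 (y i0) * u (y i0)) + b * (B i0 (y i0) * v (y i0)) := by
        simp [Pi.add_apply, Pi.smul_apply, smul_eq_mul]; ring
      rw [key]
      refine log_scc (mul_pos (hB i0 (y i0)) (hu.1 (y i0)))
        (mul_pos (hB i0 (y i0)) (hv.1 (y i0))) ?_ ha hb hab
      rw [hi0y]
      exact fun h => hk0 (mul_left_cancel₀ (hB i0 k0).ne' h)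
end

section
/- Let (Xᵢ, Yᵢ, Rᵢ)_{i≥1} be i.i.d. copies of (X, Y, R), with Y taking values in a finite label set C and R in {0,1}, satisfying: R is conditionally independent of X given Y, and E[R | Y] = φ(Y) almost surely where φ : C → ℝ with φ(k) ≥ c for some c > 0 and φ(k) ≤ 1 for all k. Let ℓ be a bounded measurable loss, |ℓ(X,Y)| ≤ L. Let (φ̂ⁿ)_{n≥1} be any sequence of C-indexed random vectors (estimators of the mechanism, possibly depending on the first n samples) such that φ̂ⁿ(k) → φ(k) in probability for every k ∈ C, and φ̂ⁿ(k) ≥ c for all k, n. Then the plug-in IPW empirical risk (1/n) Σ_{i=1}^n Rᵢ · ℓ(Xᵢ, Yᵢ) / φ̂ⁿ(Yᵢ) converges in probability to the theoretical risk E[ℓ(X,Y)] as n → ∞. -/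
/-!
The oracle IPW terms `Rᵢ ℓ(Xᵢ, Yᵢ) / φ(Yᵢ)` are i.i.d. with mean `E[ℓ(X, Y)]`: conditional
independence of `R` and `X` given `Y`, together with `E[R | Y] = φ(Y)`, says that on the event
`{R = 1}` the law of `(X, Y)` is the law of `(X, Y)` with density `φ(Y)`. Their averages therefore
converge by the strong law of large numbers. Since `φ̂ⁿ, φ ≥ c` and `|R ℓ| ≤ L`, the plug-in
average differs from the oracle one by at most `L / c² · maxₖ |φ̂ⁿ(k) - φ(k)|`, which tends to `0`
in probability because `C` is finite.
-/

open MeasureTheory ProbabilityTheory Filter Topology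

lemma indicator_preimage_one_eq_self {Ω : Type*} {R : Ω → ℝ}
    (hR01 : ∀ ω, R ω = 0 ∨ R ω = 1) : (R ⁻¹' {1}).indicator (fun _ => (1 : ℝ)) = R := by
  ext ω
  rcases hR01 ω with h | h <;> simp [h]

section SelfMasking

variable {Ω 𝒳 : Type*} {m mΩ : MeasurableSpace Ω} [StandardBorelSpace Ω] [MeasurableSpace 𝒳]
  {μ : Measure Ω} [IsFiniteMeasure μ] {X : Ω → 𝒳} {R : Ω → ℝ}

theorem measureReal_inter_eq_setIntegral_condExp_of_condIndepFun (hm : m ≤ mΩ)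
    (hX : Measurable X) (hR : Measurable R) (hR01 : ∀ ω, R ω = 0 ∨ R ω = 1)
    (hCI : CondIndepFun m hm R X μ) {B : Set 𝒳} {T : Set Ω} (hB : MeasurableSet B)
    (hT : MeasurableSet[m] T) :
    μ.real (R ⁻¹' {1} ∩ (X ⁻¹' B ∩ T)) = ∫ ω in X ⁻¹' B ∩ T, (μ[R | m]) ω ∂μ := by
  have hXB : MeasurableSet (X ⁻¹' B) := hX hB
  have hA : MeasurableSet (R ⁻¹' {1}) := hR (measurableSet_singleton 1)
  have hproduct := (condIndepFun_iff_condExp_inter_preimage_eq_mul hR hX).1 hCI {1} B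
    (measurableSet_singleton 1) hB
  rw [indicator_preimage_one_eq_self hR01] at hproduct
  have hind : μ[R | m] * (X ⁻¹' B).indicator (fun _ => (1 : ℝ))
      = (X ⁻¹' B).indicator (μ[R | m]) := by
    ext ω; by_cases h : ω ∈ X ⁻¹' B <;> simp [h]
  have hpull : μ[μ[R | m] * (X ⁻¹' B).indicator (fun _ => (1 : ℝ)) | m]
      =ᵐ[μ] μ[R | m] * μ⟦X ⁻¹' B | m⟧ :=
    condExp_mul_of_stronglyMeasurable_left stronglyMeasurable_condExp
      (hind ▸ integrable_condExp.indicator hXB) ((integrable_const 1).indicator hXB)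
  calc μ.real (R ⁻¹' {1} ∩ (X ⁻¹' B ∩ T))
      = ∫ ω in T, (R ⁻¹' {1} ∩ X ⁻¹' B).indicator (fun _ => (1 : ℝ)) ω ∂μ := by
        rw [setIntegral_indicator (hA.inter hXB), setIntegral_const, smul_eq_mul, mul_one,
          Set.inter_comm T, Set.inter_assoc]
    _ = ∫ ω in T, (μ⟦R ⁻¹' {1} ∩ X ⁻¹' B | m⟧) ω ∂μ :=
        (setIntegral_condExp hm ((integrable_const 1).indicator (hA.inter hXB)) hT).symm
    _ = ∫ ω in T, (μ[μ[R | m] * (X ⁻¹' B).indicator (fun _ => (1 : ℝ)) | m]) ω ∂μ :=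
        setIntegral_congr_ae (hm _ hT) ((hproduct.trans hpull.symm).mono fun _ h _ => h)
    _ = ∫ ω in T, (X ⁻¹' B).indicator (μ[R | m]) ω ∂μ := by
        rw [setIntegral_condExp hm (hind ▸ integrable_condExp.indicator hXB) hT, hind]
    _ = ∫ ω in X ⁻¹' B ∩ T, (μ[R | m]) ω ∂μ := by
        rw [setIntegral_indicator hXB, Set.inter_comm]

variable {C : Type*} [MeasurableSpace C] {Y : Ω → C} {φ : C → ℝ}

theorem map_restrict_eq_withDensity_of_condIndepFun (hX : Measurable X) (hY : Measurable Y)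
    (hR : Measurable R) (hR01 : ∀ ω, R ω = 0 ∨ R ω = 1)
    (hCI : CondIndepFun (MeasurableSpace.comap Y inferInstance) hY.comap_le R X μ)
    (hφ : Measurable φ) (hφ_nonneg : ∀ k, 0 ≤ φ k)
    (hmech : μ[R | MeasurableSpace.comap Y inferInstance] =ᵐ[μ] fun ω => φ (Y ω)) :
    (μ.restrict (R ⁻¹' {1})).map (fun ω => (X ω, Y ω))
      = (μ.map (fun ω => (X ω, Y ω))).withDensity (fun p => ENNReal.ofReal (φ p.2)) := by
  have hXY : Measurable fun ω => (X ω, Y ω) := hX.prodMk hY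
  have hρ : Measurable fun p : 𝒳 × C => ENNReal.ofReal (φ p.2) := by fun_prop
  have hφY : Integrable (fun ω => φ (Y ω)) μ := integrable_condExp.congr hmech
  refine Measure.ext_prod fun {B S} hB hS => ?_
  have hBS : (fun ω => (X ω, Y ω)) ⁻¹' B ×ˢ S = X ⁻¹' B ∩ Y ⁻¹' S := Set.mk_preimage_prod _ _
  rw [Measure.map_apply hXY (hB.prod hS), Measure.restrict_apply (hXY (hB.prod hS)),
    withDensity_apply _ (hB.prod hS), setLIntegral_map (hB.prod hS) hρ hXY, hBS, Set.inter_comm,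
    ← ofReal_measureReal,
    measureReal_inter_eq_setIntegral_condExp_of_condIndepFun hY.comap_le hX hR hR01 hCI hB
      ⟨S, hS, rfl⟩,
    setIntegral_congr_ae ((hX hB).inter (hY hS)) (hmech.mono fun _ h _ => h),
    ofReal_integral_eq_lintegral_ofReal hφY.integrableOn
      (Eventually.of_forall fun _ => hφ_nonneg _)]

theorem integral_mul_comp_eq_integral_mul_of_condIndepFun (hX : Measurable X) (hY : Measurable Y)
    (hR : Measurable R) (hR01 : ∀ ω, R ω = 0 ∨ R ω = 1)
    (hCI : CondIndepFun (MeasurableSpace.comap Y inferInstance) hY.comap_le R X μ)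
    (hφ : Measurable φ) (hφ_nonneg : ∀ k, 0 ≤ φ k)
    (hmech : μ[R | MeasurableSpace.comap Y inferInstance] =ᵐ[μ] fun ω => φ (Y ω))
    {h : 𝒳 × C → ℝ} (hh : Measurable h) :
    ∫ ω, R ω * h (X ω, Y ω) ∂μ = ∫ ω, φ (Y ω) * h (X ω, Y ω) ∂μ := by
  have hXY : Measurable fun ω => (X ω, Y ω) := hX.prodMk hY
  have hA : MeasurableSet (R ⁻¹' {1}) := hR (measurableSet_singleton 1)
  have hρ : Measurable fun p : 𝒳 × C => ENNReal.ofReal (φ p.2) := by fun_prop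
  calc ∫ ω, R ω * h (X ω, Y ω) ∂μ
      = ∫ ω in R ⁻¹' {1}, h (X ω, Y ω) ∂μ := by
        rw [← integral_indicator hA]
        congr 1 with ω
        rcases hR01 ω with hω | hω <;> simp [hω]
    _ = ∫ p, h p ∂(μ.map (fun ω => (X ω, Y ω))).withDensity (fun p => ENNReal.ofReal (φ p.2)) := by
        rw [← map_restrict_eq_withDensity_of_condIndepFun hX hY hR hR01 hCI hφ hφ_nonneg hmech,
          integral_map hXY.aemeasurable hh.aestronglyMeasurable]
    _ = ∫ ω, φ (Y ω) * h (X ω, Y ω) ∂μ := by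
        rw [integral_withDensity_eq_integral_toReal_smul hρ
          (Eventually.of_forall fun _ => ENNReal.ofReal_lt_top),
          integral_map hXY.aemeasurable (by fun_prop)]
        simp [ENNReal.toReal_ofReal (hφ_nonneg _)]

theorem integral_ipw_eq_integral_of_condIndepFun (hX : Measurable X) (hY : Measurable Y)
    (hR : Measurable R) (hR01 : ∀ ω, R ω = 0 ∨ R ω = 1)
    (hCI : CondIndepFun (MeasurableSpace.comap Y inferInstance) hY.comap_le R X μ)
    (hφ : Measurable φ) (hφ_pos : ∀ k, 0 < φ k)
    (hmech : μ[R | MeasurableSpace.comap Y inferInstance] =ᵐ[μ] fun ω => φ (Y ω))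
    {ℓ : 𝒳 → C → ℝ} (hℓ : Measurable fun p : 𝒳 × C => ℓ p.1 p.2) :
    ∫ ω, R ω * ℓ (X ω) (Y ω) / φ (Y ω) ∂μ = ∫ ω, ℓ (X ω) (Y ω) ∂μ := by
  simp_rw [mul_div_assoc]
  rw [integral_mul_comp_eq_integral_mul_of_condIndepFun hX hY hR hR01 hCI hφ
    (fun k => (hφ_pos k).le) hmech (h := fun p => ℓ p.1 p.2 / φ p.2) (by fun_prop)]
  simp_rw [mul_div_cancel₀ _ (hφ_pos _).ne']

end SelfMasking

namespace MeasureTheory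

variable {α ι : Type*} {mα : MeasurableSpace α} {μ : Measure α} {l : Filter ι}

theorem tendstoInMeasure_pi {κ : Type*} [Fintype κ] {E : κ → Type*}
    [∀ k, PseudoMetricSpace (E k)] {F : ι → α → ∀ k, E k} {G : α → ∀ k, E k}
    (h : ∀ k, TendstoInMeasure μ (fun i x => F i x k) l (fun x => G x k)) :
    TendstoInMeasure μ F l G := by
  simp_rw [tendstoInMeasure_iff_dist] at h ⊢
  intro ε hε
  have hsub : ∀ i, {x | ε ≤ dist (F i x) (G x)} ⊆ ⋃ k, {x | ε ≤ dist (F i x k) (G x k)} := by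
    intro i x hx
    by_contra hnot
    simp only [Set.mem_iUnion, Set.mem_ofPred_eq, not_exists, not_le] at hnot
    exact (not_lt.2 hx) ((dist_pi_lt_iff hε).2 hnot)
  have hsum : Tendsto (fun i => ∑ k, μ {x | ε ≤ dist (F i x k) (G x k)}) l (𝓝 0) := by
    simpa using tendsto_finsetSum Finset.univ fun k _ => h k ε hε
  exact tendsto_of_tendsto_of_tendsto_of_le_of_le tendsto_const_nhds hsum (fun _ => zero_le)
    fun i => (measure_mono (hsub i)).trans (measure_iUnion_fintype_le _ _)

theorem TendstoInMeasure.of_dist_le_mul {E E' : Type*} [PseudoMetricSpace E]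
    [PseudoMetricSpace E'] {f f' : ι → α → E} {g : α → E} {F : ι → α → E'} {G : α → E'}
    {K : ℝ} (hf : TendstoInMeasure μ f l g) (hF : TendstoInMeasure μ F l G)
    (hle : ∀ i x, dist (f' i x) (f i x) ≤ K * dist (F i x) (G x)) :
    TendstoInMeasure μ f' l g := by
  rw [tendstoInMeasure_iff_dist] at hf hF ⊢
  intro ε hε
  set δ := ε / 2 / (|K| + 1)
  have hδ : 0 < δ := by positivity
  have hsub : ∀ i, {x | ε ≤ dist (f' i x) (g x)}
      ⊆ {x | ε / 2 ≤ dist (f i x) (g x)} ∪ {x | δ ≤ dist (F i x) (G x)} := by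
    intro i x hx
    by_contra hnot
    simp only [Set.mem_union, Set.mem_ofPred_eq, not_or, not_le] at hx hnot
    have hKδ : K * dist (F i x) (G x) < ε / 2 := by
      calc K * dist (F i x) (G x) ≤ |K| * dist (F i x) (G x) :=
            mul_le_mul_of_nonneg_right (le_abs_self K) dist_nonneg
        _ ≤ |K| * δ := mul_le_mul_of_nonneg_left hnot.2.le (abs_nonneg K)
        _ < (|K| + 1) * δ := by nlinarith
        _ = ε / 2 := by simp only [δ]; field_simp
    linarith [dist_triangle (f' i x) (f i x) (g x), hle i x]
  have hsum := (hf (ε / 2) (by positivity)).add (hF δ hδ)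
  rw [add_zero] at hsum
  exact tendsto_of_tendsto_of_tendsto_of_le_of_le tendsto_const_nhds hsum (fun _ => zero_le)
    fun i => (measure_mono (hsub i)).trans (measure_union_le _ _)

end MeasureTheory

theorem tendstoInMeasure_average_of_pairwise_indepFun {Ω : Type*} {mΩ : MeasurableSpace Ω}
    {μ : Measure Ω} [IsFiniteMeasure μ] (X : ℕ → Ω → ℝ) (hint : Integrable (X 0) μ)
    (hindep : Pairwise fun i j => X i ⟂ᵢ[μ] X j) (hident : ∀ i, IdentDistrib (X i) (X 0) μ μ) :
    TendstoInMeasure μ (fun (n : ℕ) ω => 1 / (n : ℝ) * ∑ i ∈ Finset.range n, X i ω) atTop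
      (fun _ => μ[X 0]) := by
  have hX : ∀ i, AEMeasurable (X i) μ := fun i => (hident i).aemeasurable_fst
  refine tendstoInMeasure_of_tendsto_ae (fun n => ?_) ?_
  · exact ((Finset.aemeasurable_fun_sum _ fun i _ => hX i).const_mul _).aestronglyMeasurable
  · filter_upwards [strong_law_ae_real X hint hindep hident] with ω hω
    simpa [one_div, inv_mul_eq_div] using hω

lemma abs_div_sub_div_le {a x y c L : ℝ} (hc : 0 < c) (ha : |a| ≤ L) (hx : c ≤ x)
    (hy : c ≤ y) : |a / x - a / y| ≤ L / c ^ 2 * |x - y| := by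
  have hx0 : 0 < x := hc.trans_le hx
  have hy0 : 0 < y := hc.trans_le hy
  have hxy : a / x - a / y = a * (y - x) / (x * y) := by field_simp
  rw [hxy, abs_div, abs_mul, abs_of_pos (mul_pos hx0 hy0), abs_sub_comm y x,
    div_mul_eq_mul_div]
  exact div_le_div₀ (mul_nonneg ((abs_nonneg a).trans ha) (abs_nonneg _))
    (mul_le_mul_of_nonneg_right ha (abs_nonneg _)) (by positivity)
    (by nlinarith [mul_le_mul hx hy hc.le hx0.le])

lemma abs_average_sub_average_le {u v : ℕ → ℝ} {B : ℝ} (h : ∀ i, |u i - v i| ≤ B) (n : ℕ) :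
    |1 / (n : ℝ) * ∑ i ∈ Finset.range n, u i - 1 / (n : ℝ) * ∑ i ∈ Finset.range n, v i| ≤ B := by
  rw [← mul_sub, ← Finset.sum_sub_distrib, abs_mul, abs_of_nonneg (by positivity)]
  rcases n.eq_zero_or_pos with rfl | hn
  · simpa using (abs_nonneg _).trans (h 0)
  calc 1 / (n : ℝ) * |∑ i ∈ Finset.range n, (u i - v i)|
      ≤ 1 / (n : ℝ) * (n * B) := by
        gcongr
        refine (Finset.abs_sum_le_sum_abs _ _).trans ?_
        simpa using Finset.sum_le_card_nsmul (Finset.range n) _ B fun i _ => h i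
    _ = B := by field_simp

lemma dist_average_div_average_div_le {C : Type*} [Fintype C] {a : ℕ → ℝ} {y : ℕ → C}
    {ψ φ : C → ℝ} {c L : ℝ} (hc : 0 < c) (ha : ∀ i, |a i| ≤ L) (hψ : ∀ k, c ≤ ψ k)
    (hφ : ∀ k, c ≤ φ k) (n : ℕ) :
    dist (1 / (n : ℝ) * ∑ i ∈ Finset.range n, a i / ψ (y i))
      (1 / (n : ℝ) * ∑ i ∈ Finset.range n, a i / φ (y i)) ≤ L / c ^ 2 * dist ψ φ := by
  refine abs_average_sub_average_le (fun i => ?_) n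
  have hL : 0 ≤ L := (abs_nonneg _).trans (ha i)
  calc |a i / ψ (y i) - a i / φ (y i)| ≤ L / c ^ 2 * |ψ (y i) - φ (y i)| :=
        abs_div_sub_div_le hc (ha i) (hψ _) (hφ _)
    _ ≤ L / c ^ 2 * dist ψ φ := by
        gcongr
        exact dist_le_pi_dist ψ φ (y i)

theorem plugin_ipw_risk_consistent_general
    {Ω : Type*} [MeasurableSpace Ω] [StandardBorelSpace Ω]
    {𝒳 : Type*} [MeasurableSpace 𝒳]
    {C : Type*} [Fintype C] [MeasurableSpace C] [MeasurableSingletonClass C]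
    (μ : Measure Ω) [IsProbabilityMeasure μ]
    (Xs : ℕ → Ω → 𝒳) (Ys : ℕ → Ω → C) (Rs : ℕ → Ω → ℝ)
    (hmeas : ∀ i, Measurable fun ω => (Xs i ω, Ys i ω, Rs i ω))
    (hY0 : Measurable (Ys 0))
    (hindep : iIndepFun
      (fun i ω => (Xs i ω, Ys i ω, Rs i ω)) μ)
    (hident : ∀ i, IdentDistrib (fun ω => (Xs i ω, Ys i ω, Rs i ω))
      (fun ω => (Xs 0 ω, Ys 0 ω, Rs 0 ω)) μ μ)
    (hR01 : ∀ i ω, Rs i ω = 0 ∨ Rs i ω = 1)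
    (hCI : CondIndepFun (MeasurableSpace.comap (Ys 0) inferInstance) hY0.comap_le
      (Rs 0) (Xs 0) μ)
    (φ : C → ℝ) (c : ℝ) (hc : 0 < c)
    (hφ_lb : ∀ k, c ≤ φ k)
    (hmech : μ[Rs 0 | MeasurableSpace.comap (Ys 0) inferInstance]
      =ᵐ[μ] fun ω => φ (Ys 0 ω))
    (ℓ : 𝒳 → C → ℝ) (hℓ : Measurable fun p : 𝒳 × C => ℓ p.1 p.2)
    (L : ℝ) (hL : ∀ x k, |ℓ x k| ≤ L)
    (phihat : ℕ → C → Ω → ℝ)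
    (hphihat_lb : ∀ n k ω, c ≤ phihat n k ω)
    (hphihat_tendsto : ∀ k : C,
      TendstoInMeasure μ (fun n => phihat n k) atTop (fun _ => φ k)) :
    TendstoInMeasure μ
      (fun (n : ℕ) ω => (1 / (n : ℝ)) *
        ∑ i ∈ Finset.range n, Rs i ω * ℓ (Xs i ω) (Ys i ω) / phihat n (Ys i ω) ω)
      atTop
      (fun _ => ∫ ω, ℓ (Xs 0 ω) (Ys 0 ω) ∂μ) := by
  have hφ : Measurable φ := measurable_of_countable φ
  have hw : Measurable fun q : 𝒳 × C × ℝ => q.2.2 * ℓ q.1 q.2.1 / φ q.2.1 :=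
    (measurable_snd.snd.mul (hℓ.comp (measurable_fst.prodMk measurable_snd.fst))).div
      (hφ.comp measurable_snd.fst)
  have hRℓ : ∀ i ω, |Rs i ω * ℓ (Xs i ω) (Ys i ω)| ≤ L := fun i ω => by
    rcases hR01 i ω with h | h <;> simp [h, hL, (abs_nonneg _).trans (hL (Xs i ω) (Ys i ω))]
  have hW_int : Integrable (fun ω => Rs 0 ω * ℓ (Xs 0 ω) (Ys 0 ω) / φ (Ys 0 ω)) μ :=
    .of_bound (hw.comp (hmeas 0)).aestronglyMeasurable (L / c) <| ae_of_all _ fun ω => by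
      rw [Real.norm_eq_abs, abs_div, abs_of_pos (hc.trans_le (hφ_lb _))]
      exact div_le_div₀ ((abs_nonneg _).trans (hRℓ 0 ω)) (hRℓ 0 ω) hc (hφ_lb _)
  have hX0 : Measurable (Xs 0) := (hmeas 0).fst
  have hR0 : Measurable (Rs 0) := (hmeas 0).snd.snd
  have horacle : TendstoInMeasure μ (fun (n : ℕ) ω => 1 / (n : ℝ) *
        ∑ i ∈ Finset.range n, Rs i ω * ℓ (Xs i ω) (Ys i ω) / φ (Ys i ω))
      atTop (fun _ => ∫ ω, ℓ (Xs 0 ω) (Ys 0 ω) ∂μ) := by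
    rw [← integral_ipw_eq_integral_of_condIndepFun hX0 hY0 hR0 (hR01 0) hCI hφ
      (fun k => hc.trans_le (hφ_lb k)) hmech hℓ]
    exact tendstoInMeasure_average_of_pairwise_indepFun _ hW_int
      (fun i j hij => (hindep.indepFun hij).comp hw hw) (fun i => (hident i).comp hw)
  have hphihat : TendstoInMeasure μ (fun n ω k => phihat n k ω) atTop (fun _ => φ) :=
    tendstoInMeasure_pi hphihat_tendsto
  exact horacle.of_dist_le_mul hphihat fun n ω =>
    dist_average_div_average_div_le hc (hRℓ · ω) (hphihat_lb n · ω) hφ_lb n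

/-- **Consistency of the plug-in IPW risk estimator.**
Let `(Xᵢ, Yᵢ, Rᵢ)` be i.i.d. copies of `(X, Y, R)` with `Y` in a finite label set,
`R ∈ {0,1}`, `R ⟂ X | Y`, and `E[R|Y] = φ(Y)` a.s. with `c ≤ φ(k) ≤ 1`, `c > 0`.
For a bounded measurable loss `|ℓ| ≤ L` and any estimators `φ̂ⁿ` with `φ̂ⁿ(k) ≥ c`
converging in probability to `φ(k)` for each class `k`, the plug-in IPW empirical risk
`n⁻¹ ∑ᵢ Rᵢ ℓ(Xᵢ,Yᵢ)/φ̂ⁿ(Yᵢ)` converges in probability to `E[ℓ(X,Y)]`. -/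
theorem plugin_ipw_risk_consistent
    {Ω : Type*} [MeasurableSpace Ω] [StandardBorelSpace Ω]
    {𝒳 : Type*} [MeasurableSpace 𝒳]
    {C : Type*} [Fintype C] [MeasurableSpace C] [MeasurableSingletonClass C]
    (μ : Measure Ω) [IsProbabilityMeasure μ]
    (Xs : ℕ → Ω → 𝒳) (Ys : ℕ → Ω → C) (Rs : ℕ → Ω → ℝ)
    (hmeas : ∀ i, Measurable fun ω => (Xs i ω, Ys i ω, Rs i ω))
    (hY0 : Measurable (Ys 0))
    (hindep : iIndepFun
      (fun i ω => (Xs i ω, Ys i ω, Rs i ω)) μ)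
    (hident : ∀ i, IdentDistrib (fun ω => (Xs i ω, Ys i ω, Rs i ω))
      (fun ω => (Xs 0 ω, Ys 0 ω, Rs 0 ω)) μ μ)
    (hR01 : ∀ i ω, Rs i ω = 0 ∨ Rs i ω = 1)
    (hCI : CondIndepFun (MeasurableSpace.comap (Ys 0) inferInstance) hY0.comap_le
      (Rs 0) (Xs 0) μ)
    (φ : C → ℝ) (c : ℝ) (hc : 0 < c)
    (hφ_lb : ∀ k, c ≤ φ k) (hφ_ub : ∀ k, φ k ≤ 1)
    (hmech : μ[Rs 0 | MeasurableSpace.comap (Ys 0) inferInstance]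
      =ᵐ[μ] fun ω => φ (Ys 0 ω))
    (ℓ : 𝒳 → C → ℝ) (hℓ : Measurable fun p : 𝒳 × C => ℓ p.1 p.2)
    (L : ℝ) (hL : ∀ x k, |ℓ x k| ≤ L)
    (phihat : ℕ → C → Ω → ℝ)
    (hphihat_meas : ∀ n k, Measurable (phihat n k))
    (hphihat_lb : ∀ n k ω, c ≤ phihat n k ω)
    (hphihat_tendsto : ∀ k : C,
      TendstoInMeasure μ (fun n => phihat n k) atTop (fun _ => φ k)) :
    TendstoInMeasure μ
      (fun (n : ℕ) ω => (1 / (n : ℝ)) *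
        ∑ i ∈ Finset.range n, Rs i ω * ℓ (Xs i ω) (Ys i ω) / phihat n (Ys i ω) ω)
      atTop
      (fun _ => ∫ ω, ℓ (Xs 0 ω) (Ys 0 ω) ∂μ) :=
  plugin_ipw_risk_consistent_general μ Xs Ys Rs hmeas hY0 hindep hident hR01 hCI φ c hc hφ_lb hmech
    ℓ hℓ L hL phihat hphihat_lb hphihat_tendsto
end
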